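/- Let f(z) = [(1+z)²-1]/2 and g(z) = z/(1+z), and let α, β be real with β > 0 and 3β - α - 3 > 0. Then at z = 2/(3β-α-1) ∈ (0,1), Re(1 + z C_{α,β}[f,g]''(z)/C_{α,β}[f,g]'(z)) = β(α - 3β + 3)/((3β-α)(3β-α+1)) < 0; hence C_{α,β}[f,g] is not convex. -/

import Mathlib

/-! On the unit disc the integrand of `C` equals `φ(w) = (1 + w/2)^α ((1 + w)^2)^{-β}`, which is
holomorphic there. A radial integral of a holomorphic function on a disc is a primitive of it, so
`C' = φ` and `1 + z C''/C' = 1 + z φ'/φ = 1 + z (α/(2 + z) - 2β/(1 + z))`. At the real point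
`z₀ = 2/(3β - α - 1)` this is `β(α - 3β + 3)/((3β - α)(3β - α + 1)) < 0`. -/

open Complex Metric Topology Filter Set intervalIntegral

namespace Complex

lemma inv_mem_slitPlane {z : ℂ} (hz : z ∈ slitPlane) : z⁻¹ ∈ slitPlane := by
  have hn : 0 < normSq z := normSq_pos.2 (slitPlane_ne_zero hz)
  rw [mem_slitPlane_iff] at hz ⊢
  rw [inv_re, inv_im]
  rcases hz with hre | him
  · exact Or.inl (div_pos hre hn)
  · exact Or.inr (div_ne_zero (neg_ne_zero.2 him) hn.ne')

lemma sq_mem_slitPlane_of_re_pos {z : ℂ} (hz : 0 < z.re) : z ^ 2 ∈ slitPlane := by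
  rw [mem_slitPlane_iff, sq, mul_re, mul_im]
  by_cases him : z.im = 0
  · left
    simp only [him, mul_zero, sub_zero]
    positivity
  · exact Or.inr fun h => mul_ne_zero hz.ne' him (by linarith)

end Complex

lemma HasDerivAt.cpow_const_eq_mul_div {f : ℂ → ℂ} {f' x : ℂ} (γ : ℂ) (hf : HasDerivAt f f' x)
    (h0 : f x ∈ slitPlane) : HasDerivAt (fun x => f x ^ γ) (f x ^ γ * (γ * f' / f x)) x := by
  convert hf.cpow_const (c := γ) h0 using 1
  rw [cpow_sub _ _ (slitPlane_ne_zero h0), cpow_one]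
  ring

lemma ofReal_mul_mem_ball_zero {r t : ℝ} {z : ℂ} (ht : t ∈ Icc (0 : ℝ) 1)
    (hz : z ∈ ball (0 : ℂ) r) :
    (t : ℂ) * z ∈ ball (0 : ℂ) r := by
  rw [mem_ball_zero_iff] at hz ⊢
  rw [norm_mul, norm_real, Real.norm_of_nonneg ht.1]
  nlinarith [norm_nonneg z, ht.2]

/-- For a primitive `Φ` of `φ` on the disc, the radial integral is `Φ z - Φ 0`. -/
theorem hasDerivAt_integral_radial {φ : ℂ → ℂ} {r : ℝ} (hφ : DifferentiableOn ℂ φ (ball 0 r))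
    {z : ℂ} (hz : z ∈ ball 0 r) :
    HasDerivAt (fun z : ℂ => ∫ t in (0 : ℝ)..1, φ (t * z) * z) (φ z) z := by
  obtain ⟨Φ, hΦ⟩ := hφ.isExactOn_ball
  have hradial : ∀ w ∈ ball (0 : ℂ) r, ∫ t in (0 : ℝ)..1, φ (t * w) * w = Φ w - Φ 0 := by
    intro w hw
    have hseg : ∀ t ∈ uIcc (0 : ℝ) 1, (t : ℂ) * w ∈ ball (0 : ℂ) r := fun t ht =>
      ofReal_mul_mem_ball_zero (by rwa [uIcc_of_le zero_le_one] at ht) hw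
    have hderiv : ∀ t ∈ uIcc (0 : ℝ) 1, HasDerivAt (fun t : ℝ => Φ (t * w)) (φ (t * w) * w) t :=
      fun t ht => ((hΦ _ (hseg t ht)).comp (t : ℂ)
        (hasDerivAt_mul_const w)).comp_ofReal
    have hint : IntervalIntegrable (fun t : ℝ => φ (t * w) * w) MeasureTheory.volume 0 1 := by
      refine ContinuousOn.intervalIntegrable (ContinuousOn.mul ?_ continuousOn_const)
      exact hφ.continuousOn.comp (by fun_prop) hseg
    simpa using integral_eq_sub_of_hasDerivAt hderiv hint
  exact ((hΦ z hz).sub_const (Φ 0)).congr_of_eventuallyEq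
    (eventually_of_mem (isOpen_ball.mem_nhds hz) hradial)

/-- `(f w / w) ^ α * (g' w) ^ β` with `f w / w` written as `1 + w / 2`: unlike the quotient
(junk `0 / 0 = 0` at `w = 0`) this is holomorphic on the whole unit disc. -/
noncomputable def derivCαβ (α β : ℝ) (w : ℂ) : ℂ :=
  (1 + w / 2) ^ (α : ℂ) * ((1 + w) ^ 2)⁻¹ ^ (β : ℂ)

lemma one_add_re_pos_of_norm_lt_one {w : ℂ} (hw : ‖w‖ < 1) : 0 < (1 + w).re := by
  rw [add_re, one_re]
  linarith [neg_abs_le w.re, abs_re_le_norm w]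

lemma one_add_half_mem_slitPlane {w : ℂ} (hw : ‖w‖ < 1) : 1 + w / 2 ∈ slitPlane :=
  mem_slitPlane_of_norm_lt_one (by rw [norm_div, RCLike.norm_ofNat]; linarith [norm_nonneg w])

lemma inv_one_add_sq_mem_slitPlane {w : ℂ} (hw : ‖w‖ < 1) : ((1 + w) ^ 2)⁻¹ ∈ slitPlane :=
  inv_mem_slitPlane (sq_mem_slitPlane_of_re_pos (one_add_re_pos_of_norm_lt_one hw))

lemma derivCαβ_ne_zero (α β : ℝ) {w : ℂ} (hw : ‖w‖ < 1) : derivCαβ α β w ≠ 0 :=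
  mul_ne_zero (cpow_ne_zero_iff.2 (Or.inl (slitPlane_ne_zero (one_add_half_mem_slitPlane hw))))
    (cpow_ne_zero_iff.2 (Or.inl (slitPlane_ne_zero (inv_one_add_sq_mem_slitPlane hw))))

lemma hasDerivAt_derivCαβ (α β : ℝ) {w : ℂ} (hw : ‖w‖ < 1) :
    HasDerivAt (derivCαβ α β) (derivCαβ α β w * (α / (2 + w) - 2 * β / (1 + w))) w := by
  have hw1 : 1 + w ≠ 0 := slitPlane_ne_zero (mem_slitPlane_of_norm_lt_one hw)
  have hw2 : 2 + w ≠ 0 := fun h => slitPlane_ne_zero (one_add_half_mem_slitPlane hw)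
    (by linear_combination h / 2)
  have h1 := (((hasDerivAt_id' w).div_const 2).const_add 1).cpow_const_eq_mul_div (α : ℂ)
    (one_add_half_mem_slitPlane hw)
  have h2 := ((((hasDerivAt_id' w).const_add 1).fun_pow 2).fun_inv
    (pow_ne_zero 2 hw1)).cpow_const_eq_mul_div (β : ℂ) (inv_one_add_sq_mem_slitPlane hw)
  refine (h1.fun_mul h2).congr_deriv ?_
  simp only [derivCαβ]
  field_simp
  ring

lemma differentiableOn_derivCαβ (α β : ℝ) : DifferentiableOn ℂ (derivCαβ α β) (ball 0 1) :=
  fun _ hw =>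
    (hasDerivAt_derivCαβ α β (mem_ball_zero_iff.1 hw)).differentiableAt.differentiableWithinAt

lemma deriv_div_one_add {w : ℂ} (hw : 1 + w ≠ 0) :
    deriv (fun w : ℂ => w / (1 + w)) w = ((1 + w) ^ 2)⁻¹ := by
  refine ((hasDerivAt_id' w).fun_div ((hasDerivAt_id' w).const_add 1) hw).deriv.trans ?_
  field_simp
  ring

lemma integral_radial_eq_integral_derivCαβ (α β : ℝ) {f g : ℂ → ℂ}
    (hf : ∀ z : ℂ, f z = ((1 + z) ^ 2 - 1) / 2) (hg : ∀ z : ℂ, g z = z / (1 + z))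
    {z : ℂ} (hz : z ∈ ball (0 : ℂ) 1) :
    ∫ t in (0 : ℝ)..1, (f (t * z) / (t * z)) ^ (α : ℂ) * (deriv g (t * z)) ^ (β : ℂ) * z
      = ∫ t in (0 : ℝ)..1, derivCαβ α β (t * z) * z := by
  rcases eq_or_ne z 0 with rfl | hz0
  · simp
  refine integral_congr_ae (MeasureTheory.ae_of_all _ fun t ht => ?_)
  rw [uIoc_of_le zero_le_one] at ht
  have ht0 : (t : ℂ) ≠ 0 := ofReal_ne_zero.2 ht.1.ne'
  have hquot : f (t * z) / (t * z) = 1 + t * z / 2 := by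
    rw [hf]
    field_simp
    ring
  have hderiv : deriv g (t * z) = ((1 + t * z) ^ 2)⁻¹ := by
    rw [funext hg, deriv_div_one_add (slitPlane_ne_zero (mem_slitPlane_of_norm_lt_one
      (mem_ball_zero_iff.1 (ofReal_mul_mem_ball_zero (Ioc_subset_Icc_self ht) hz))))]
  rw [hquot, hderiv, derivCαβ]

lemma one_add_mul_deriv_deriv_div_deriv (α β : ℝ) {C : ℂ → ℂ}
    (hC : EqOn C (fun z : ℂ => ∫ t in (0 : ℝ)..1, derivCαβ α β (t * z) * z) (ball 0 1))
    {z : ℂ} (hz : z ∈ ball (0 : ℂ) 1) :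
    1 + z * deriv (deriv C) z / deriv C z = 1 + z * (α / (2 + z) - 2 * β / (1 + z)) := by
  have hC' : ∀ w ∈ ball (0 : ℂ) 1, HasDerivAt C (derivCαβ α β w) w := fun w hw =>
    (hasDerivAt_integral_radial (differentiableOn_derivCαβ α β) hw).congr_of_eventuallyEq
      (hC.eventuallyEq_of_mem (isOpen_ball.mem_nhds hw))
  have hderiv : deriv C =ᶠ[𝓝 z] derivCαβ α β :=
    eventually_of_mem (isOpen_ball.mem_nhds hz) fun w hw => (hC' w hw).deriv
  have hz1 : ‖z‖ < 1 := mem_ball_zero_iff.1 hz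
  rw [hderiv.deriv_eq, hderiv.eq_of_nhds, (hasDerivAt_derivCαβ α β hz1).deriv,
    mul_div_assoc, mul_div_cancel_left₀ _ (derivCαβ_ne_zero α β hz1)]

lemma one_add_mul_sub_at_two_div_eq {α β : ℝ} (h : 0 < 3 * β - α - 3) :
    1 + 2 / (3 * β - α - 1) * (α / (2 + 2 / (3 * β - α - 1)) - 2 * β / (1 + 2 / (3 * β - α - 1)))
      = β * (α - 3 * β + 3) / ((3 * β - α) * (3 * β - α + 1)) := by
  have h1 : 3 * β - α - 1 ≠ 0 := by linarith
  have h2 : 3 * β - α ≠ 0 := by linarith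
  have h3 : 3 * β - α + 1 ≠ 0 := by linarith
  have e1 : 2 + 2 / (3 * β - α - 1) = 2 * (3 * β - α) / (3 * β - α - 1) := by
    field_simp
    ring
  have e2 : 1 + 2 / (3 * β - α - 1) = (3 * β - α + 1) / (3 * β - α - 1) := by
    field_simp
    ring
  rw [e1, e2]
  field_simp
  ring

/-- for `f(z) = ((1+z)²-1)/2`, `g(z) = z/(1+z)`, `β > 0` and `3β - α - 3 > 0`,
at `z₀ = 2/(3β-α-1) ∈ (0,1)` one has
`Re (1 + z₀ C''/C') = β(α-3β+3)/((3β-α)(3β-α+1)) < 0`; hence `C_{α,β}[f,g]` is not convex. -/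
theorem stmt_18 (α β : ℝ) (hβ : 0 < β) (hαβ : 0 < 3 * β - α - 3)
    (f g : ℂ → ℂ)
    (hfdef : ∀ z : ℂ, f z = ((1 + z) ^ 2 - 1) / 2)
    (hgdef : ∀ z : ℂ, g z = z / (1 + z))
    (C : ℂ → ℂ)
    (hC : ∀ z ∈ ball (0:ℂ) 1,
      C z = ∫ t in (0:ℝ)..1,
        (f ((t : ℂ) * z) / ((t : ℂ) * z)) ^ (α : ℂ)
          * (deriv g ((t : ℂ) * z)) ^ (β : ℂ) * z) :
    (0 < 2 / (3 * β - α - 1) ∧ 2 / (3 * β - α - 1) < 1) ∧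
    ((1 + ((2 / (3 * β - α - 1) : ℝ) : ℂ)
        * deriv (deriv C) ((2 / (3 * β - α - 1) : ℝ) : ℂ)
        / deriv C ((2 / (3 * β - α - 1) : ℝ) : ℂ)).re
      = β * (α - 3 * β + 3) / ((3 * β - α) * (3 * β - α + 1))) ∧
    (β * (α - 3 * β + 3) / ((3 * β - α) * (3 * β - α + 1)) < 0) ∧
    ¬ (∀ z ∈ ball (0:ℂ) 1, 0 < (1 + z * deriv (deriv C) z / deriv C z).re) := by
  have hz₀_pos : 0 < 2 / (3 * β - α - 1) := div_pos two_pos (by linarith)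
  have hz₀_lt : 2 / (3 * β - α - 1) < 1 := (div_lt_one (by linarith)).2 (by linarith)
  have hz₀_mem : ((2 / (3 * β - α - 1) : ℝ) : ℂ) ∈ ball (0 : ℂ) 1 := by
    rw [mem_ball_zero_iff, norm_real, Real.norm_of_nonneg hz₀_pos.le]
    exact hz₀_lt
  have hCαβ : EqOn C (fun z : ℂ => ∫ t in (0 : ℝ)..1, derivCαβ α β (t * z) * z) (ball 0 1) :=
    fun z hz => (hC z hz).trans (integral_radial_eq_integral_derivCαβ α β hfdef hgdef hz)
  have hvalue : (1 + ((2 / (3 * β - α - 1) : ℝ) : ℂ)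
        * deriv (deriv C) ((2 / (3 * β - α - 1) : ℝ) : ℂ)
        / deriv C ((2 / (3 * β - α - 1) : ℝ) : ℂ)).re
      = β * (α - 3 * β + 3) / ((3 * β - α) * (3 * β - α + 1)) := by
    rw [one_add_mul_deriv_deriv_div_deriv α β hCαβ hz₀_mem,
      ← one_add_mul_sub_at_two_div_eq hαβ]
    norm_cast
  have hneg : β * (α - 3 * β + 3) / ((3 * β - α) * (3 * β - α + 1)) < 0 :=
    div_neg_of_neg_of_pos (mul_neg_of_pos_of_neg hβ (by linarith))
      (mul_pos (by linarith) (by linarith))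
  refine ⟨⟨hz₀_pos, hz₀_lt⟩, hvalue, hneg, fun hconvex => ?_⟩
  have := hconvex _ hz₀_mem
  linarith
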